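/- arXiv:2405.19382 — 3 statements merged into one kernel-verified Lean document; each statement's English description precedes it below -/
import Mathlib

section
/- For indicator random variables X_1,...,X_n, real 0 < β < 1 and integer 0 < k < βn, the probability that X_1+...+X_n ≥ βn is at most (1/C(⌊βn⌋,k)) times the sum over all subsets S of {1,...,n} of size k of P(∀ i ∈ S, X_i = 1). -/
open MeasureTheory Finset
open scoped ENNReal

/-!
On the event `β n ≤ ∑ Xᵢ` the set `T = {i | Xᵢ = 1}` has at least `⌊β n⌋` elements, so at least
`C(⌊β n⌋, k)` of the `k`-subsets `S` satisfy `Xᵢ = 1` for all `i ∈ S`. Markov's inequality for the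
number of such subsets, whose integral is the sum of their probabilities, gives the bound.
-/

open scoped Classical in
theorem natCast_mul_measure_le_sum_measure {Ω ι : Type*} [MeasurableSpace Ω] (μ : Measure Ω)
    (s : Finset ι) {B : ι → Set Ω} (hB : ∀ i ∈ s, MeasurableSet (B i)) {A : Set Ω} (c : ℕ)
    (hA : ∀ ω ∈ A, c ≤ #{i ∈ s | ω ∈ B i}) :
    c * μ A ≤ ∑ i ∈ s, μ (B i) := by
  set f : Ω → ℝ≥0∞ := fun ω ↦ ∑ i ∈ s, (B i).indicator 1 ω
  have hf : ∀ ω, f ω = #{i ∈ s | ω ∈ B i} := fun ω ↦ by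
    simp [f, Set.indicator_apply, Finset.sum_boole]
  calc (c : ℝ≥0∞) * μ A ≤ c * μ {ω | (c : ℝ≥0∞) ≤ f ω} := by
        gcongr
        intro ω hω
        simpa [hf] using hA ω hω
    _ ≤ ∫⁻ ω, f ω ∂μ :=
        mul_meas_ge_le_lintegral (Finset.measurable_sum _ fun i hi ↦
          measurable_one.indicator (hB i hi)) _
    _ = ∑ i ∈ s, μ (B i) := by
        rw [lintegral_finsetSum _ fun i hi ↦ measurable_one.indicator (hB i hi)]
        exact Finset.sum_congr rfl fun i hi ↦ lintegral_indicator_one (hB i hi)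

theorem sum_eq_card_filter_eq_one {ι R : Type*} [AddCommMonoidWithOne R] (s : Finset ι)
    {x : ι → R} (hx : ∀ i, x i = 0 ∨ x i = 1) [DecidablePred (fun i ↦ x i = 1)] :
    ∑ i ∈ s, x i = #{i ∈ s | x i = 1} := by
  rw [← Finset.sum_boole]
  refine Finset.sum_congr rfl fun i _ ↦ ?_
  split_ifs with h
  · exact h
  · exact (hx i).resolve_right h

theorem linial_luria_first_part_general {Ω : Type*} [MeasurableSpace Ω]
    (μ : Measure Ω)
    (n : ℕ) (X : Fin n → Ω → ℝ) (hX : ∀ i, Measurable (X i))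
    (hind : ∀ i ω, X i ω = 0 ∨ X i ω = 1)
    (β : ℝ) (k : ℕ) (hk : (k : ℝ) < β * n) :
    μ {ω | β * n ≤ ∑ i, X i ω} ≤
      (1 / (Nat.choose ⌊β * (n : ℝ)⌋₊ k : ℝ≥0∞)) *
        ∑ S ∈ (Finset.univ : Finset (Fin n)).powersetCard k,
          μ {ω | ∀ i ∈ S, X i ω = 1} := by
  have hC : 0 < Nat.choose ⌊β * (n : ℝ)⌋₊ k := Nat.choose_pos (Nat.le_floor hk.le)
  rw [one_div, ← ENNReal.mul_le_iff_le_inv (by exact_mod_cast hC.ne') (ENNReal.natCast_ne_top _)]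
  refine natCast_mul_measure_le_sum_measure μ _ (fun S _ ↦ ?_) _ fun ω hω ↦ ?_
  · simp_rw [Set.ofPred_forall]
    exact .biInter S.countable_toSet fun i _ ↦ hX i (measurableSet_singleton 1)
  · set T : Finset (Fin n) := {i | X i ω = 1}
    have hT : β * n ≤ #T := by rw [← sum_eq_card_filter_eq_one _ (hind · ω)]; exact hω
    calc Nat.choose ⌊β * (n : ℝ)⌋₊ k ≤ Nat.choose #T k :=
          Nat.choose_le_choose k (Nat.floor_le_of_le hT)
      _ = #(T.powersetCard k) := (card_powersetCard k T).symm
      _ ≤ _ := card_le_card fun S hS ↦ by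
          rw [mem_powersetCard] at hS
          simp only [mem_filter, mem_powersetCard, Set.mem_ofPred_eq]
          exact ⟨⟨subset_univ S, hS.2⟩, fun i hi ↦ (mem_filter_univ i).1 (hS.1 hi)⟩

/-- Linial–Luria generalized Chernoff bound, first part. -/
theorem linial_luria_first_part {Ω : Type*} [MeasurableSpace Ω]
    (μ : Measure Ω) [IsProbabilityMeasure μ]
    (n : ℕ) (X : Fin n → Ω → ℝ) (hX : ∀ i, Measurable (X i))
    (hind : ∀ i ω, X i ω = 0 ∨ X i ω = 1)
    (β : ℝ) (hβ0 : 0 < β) (hβ1 : β < 1)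
    (k : ℕ) (hk0 : 0 < k) (hk : (k : ℝ) < β * n) :
    μ {ω | β * n ≤ ∑ i, X i ω} ≤
      (1 / (Nat.choose ⌊β * (n : ℝ)⌋₊ k : ℝ≥0∞)) *
        ∑ S ∈ (Finset.univ : Finset (Fin n)).powersetCard k,
          μ {ω | ∀ i ∈ S, X i ω = 1} :=
  linial_luria_first_part_general μ n X hX hind β k hk
end

section
/- Let G be a finite simple graph on N vertices v_1,...,v_N. Then the independence number α(G) satisfies α(G) ≥ ∑_{k=1}^N 1/(d(v_k)+1), where d(v_k) is the degree of v_k (Caro–Wei bound). -/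
open Finset

/-- Auxiliary lemma for the Caro–Wei bound: greedy induction over a finite set of
vertices, using degrees counted inside the set. -/
lemma caro_wei_aux {V : Type*} [DecidableEq V] (G : SimpleGraph V) [DecidableRel G.Adj]
    (n : ℕ) : ∀ s : Finset V, s.card = n →
    ∃ t : Finset V, t ⊆ s ∧ (∀ v ∈ t, ∀ w ∈ t, ¬ G.Adj v w) ∧
      (∑ u ∈ s, (1 : ℝ) / ((s.filter (G.Adj u)).card + 1)) ≤ t.card := by
  induction n using Nat.strong_induction_on with
  | _ n ih =>
    intro s hs
    rcases s.eq_empty_or_nonempty with rfl | hne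
    · exact ⟨∅, by simp⟩
    · -- choose a vertex of minimum degree inside s
      obtain ⟨v, hv, hvmin⟩ := s.exists_min_image (fun u => (s.filter (G.Adj u)).card) hne
      set R : Finset V := insert v (s.filter (G.Adj v)) with hR
      have hRsub : R ⊆ s := by
        intro x hx
        rcases Finset.mem_insert.mp hx with rfl | hx
        · exact hv
        · exact (Finset.mem_filter.mp hx).1
      have hvR : v ∈ R := Finset.mem_insert_self _ _
      have hRcard : R.card = (s.filter (G.Adj v)).card + 1 := by
        rw [hR, Finset.card_insert_of_notMem]
        simp [G.irrefl]
      set s' := s \ R with hs'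
      have hs'sub : s' ⊆ s := Finset.sdiff_subset
      have hs'card : s'.card < n := by
        rw [← hs]
        exact Finset.card_lt_card (Finset.ssubset_iff_of_subset hs'sub |>.mpr
          ⟨v, hv, by simp [hs', hvR]⟩)
      obtain ⟨t, hts, htind, htsum⟩ := ih s'.card hs'card s' rfl
      have hvt : v ∉ t := by
        intro h
        have := hts h
        simp [hs', hvR] at this
      refine ⟨insert v t, ?_, ?_, ?_⟩
      · intro x hx
        rcases Finset.mem_insert.mp hx with rfl | hx
        · exact hv
        · exact hs'sub (hts hx)
      · intro a ha b hb
        have hadj : ∀ w ∈ t, ¬ G.Adj v w := by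
          intro w hw hadj
          have hws' : w ∈ s' := hts hw
          have : w ∉ R := (Finset.mem_sdiff.mp hws').2
          exact this (Finset.mem_insert_of_mem (Finset.mem_filter.mpr
            ⟨hs'sub hws', hadj⟩))
        rcases Finset.mem_insert.mp ha with ha' | ha'
        · rcases Finset.mem_insert.mp hb with hb' | hb'
          · rw [ha', hb']; exact G.irrefl
          · rw [ha']; exact hadj b hb'
        · rcases Finset.mem_insert.mp hb with hb' | hb'
          · rw [hb']; exact fun h => hadj a ha' h.symm
          · exact htind a ha' b hb'
      · -- sum estimate
        have hsplit : (∑ u ∈ s, (1 : ℝ) / ((s.filter (G.Adj u)).card + 1))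
            = (∑ u ∈ R, (1 : ℝ) / ((s.filter (G.Adj u)).card + 1))
              + ∑ u ∈ s', (1 : ℝ) / ((s.filter (G.Adj u)).card + 1) := by
          rw [hs', Finset.sum_sdiff_eq_sub hRsub]; ring
        have h1 : (∑ u ∈ R, (1 : ℝ) / ((s.filter (G.Adj u)).card + 1)) ≤ 1 := by
          have : ∀ u ∈ R, (1 : ℝ) / ((s.filter (G.Adj u)).card + 1)
              ≤ 1 / ((s.filter (G.Adj v)).card + 1) := by
            intro u hu
            apply one_div_le_one_div_of_le
            · positivity
            · have := hvmin u (hRsub hu)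
              linarith [(Nat.cast_le (α := ℝ)).mpr this]
          calc (∑ u ∈ R, (1 : ℝ) / ((s.filter (G.Adj u)).card + 1))
              ≤ ∑ u ∈ R, (1 : ℝ) / ((s.filter (G.Adj v)).card + 1) :=
                Finset.sum_le_sum this
            _ = R.card * (1 / ((s.filter (G.Adj v)).card + 1)) := by
                rw [Finset.sum_const, nsmul_eq_mul]
            _ = 1 := by
                rw [hRcard]
                push_cast
                field_simp
        have h2 : (∑ u ∈ s', (1 : ℝ) / ((s.filter (G.Adj u)).card + 1))
            ≤ ∑ u ∈ s', (1 : ℝ) / ((s'.filter (G.Adj u)).card + 1) := by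
          apply Finset.sum_le_sum
          intro u hu
          apply one_div_le_one_div_of_le
          · positivity
          · have : (s'.filter (G.Adj u)).card ≤ (s.filter (G.Adj u)).card :=
              Finset.card_le_card (Finset.filter_subset_filter _ hs'sub)
            linarith [(Nat.cast_le (α := ℝ)).mpr this]
        have hcard : ((insert v t).card : ℝ) = t.card + 1 := by
          rw [Finset.card_insert_of_notMem hvt]; push_cast; ring
        rw [hsplit, hcard]
        linarith

/-- Caro–Wei bound: the independence number of a finite simple graph on `N` vertices
is at least `∑ 1 / (d(v) + 1)`. -/
theorem caro_wei (N : ℕ) (G : SimpleGraph (Fin N)) [DecidableRel G.Adj] :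
    ∃ s : Finset (Fin N), (∀ v ∈ s, ∀ w ∈ s, ¬ G.Adj v w) ∧
      (∑ k : Fin N, (1 : ℝ) / (G.degree k + 1)) ≤ s.card := by
  obtain ⟨t, _, htind, htsum⟩ := caro_wei_aux G (Finset.univ.card) (Finset.univ : Finset (Fin N)) rfl
  refine ⟨t, htind, ?_⟩
  convert htsum using 2 with k
  congr 2
  rw [SimpleGraph.degree, ← SimpleGraph.neighborFinset_eq_filter]
end

section
/- Let W, Y be positive random variables, (Y₀,Y₁) an independent pair of copies of Y independent of (W₀,W₁) with W₀ =_d W₁ =_d W, and suppose Y stochastically dominates W₀Y₀ + W₁Y₁, i.e. P(Y ≥ x) ≥ P(W₀Y₀+W₁Y₁ ≥ x) for all x. Suppose there are γ > 1, c > 0, x' ∈ (0,1) with P(W ≤ x) ≤ exp(-c(-log x)^γ) for all x ≤ x'. Then for each α ∈ [1,γ) there are c_α > 0 and t_α > 0 such that E[e^{-tY}] ≤ exp(-c_α (log t)^α) for all t ≥ t_α. -/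
/-!
Write `G u = E[exp (-e^u Y)]`, the Laplace transform `mgf Y μ (-t)` at `t = e^u`.
If neither `W₀` nor `W₁` is below `x = e^(v-u)`, then `e^u (W₀Y₀ + W₁Y₁) ≥ e^v (Y₀ + Y₁)`;
with the smoothing inequality, independence of `Y₀, Y₁` and the small-ball tail of `W`, this gives
`G u ≤ 2 exp (-c (u - v)^γ) + (G v)^2` whenever `u - v ≥ -log x'`.
Take `v = u / l` with `l^α = √2`: squaring a bound `exp (-b (u/l)^α)` turns it into
`exp (-√2 b u^α)`, at most half of `exp (-b u^α)` once `(√2 - 1) b u^α ≥ log 2`, while the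
first term is negligible since `γ > α`. So the bound `exp (-b u^α)` propagates from a base
interval `[u₀, l u₀]`, where it holds because `G u → 0`, to all `u ≥ u₀`.
-/

open Filter Real Set MeasureTheory ProbabilityTheory
open scoped Topology

lemma mul_exp_neg_le_exp_neg {k A B : ℝ} (hk : 0 < k) (h : B + log k ≤ A) :
    k * exp (-A) ≤ exp (-B) := by
  rw [← exp_log hk, ← exp_add]
  exact exp_le_exp.2 (by linarith)

lemma eventually_rpow_add_le_mul_rpow {α γ a : ℝ} (hα : 0 < α) (hαγ : α < γ) (ha : 0 < a)
    (C : ℝ) : ∀ᶠ u in atTop, u ^ α + C ≤ a * u ^ γ := by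
  filter_upwards [eventually_gt_atTop 0, (tendsto_rpow_atTop hα).eventually_ge_atTop C,
    (tendsto_rpow_atTop (sub_pos.2 hαγ)).eventually_ge_atTop (2 / a)] with u hu hC hγα
  rw [div_le_iff₀ ha] at hγα
  have hsplit : u ^ γ = u ^ (γ - α) * u ^ α := by rw [← rpow_add hu, sub_add_cancel]
  nlinarith [rpow_pos_of_pos hu α]

lemma forall_ge_of_Icc_of_div {P : ℝ → Prop} {l u₀ : ℝ} (hl : 1 < l) (hu₀ : 0 < u₀)
    (hbase : ∀ u ∈ Icc u₀ (l * u₀), P u) (hstep : ∀ u, l * u₀ < u → P (u / l) → P u) :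
    ∀ u, u₀ ≤ u → P u := by
  have hl₀ : 0 < l := by linarith
  have hscale : ∀ n : ℕ, ∀ u ∈ Icc u₀ (l ^ (n + 1) * u₀), P u := by
    intro n
    induction n with
    | zero => simpa using hbase
    | succ n ih =>
      rintro u ⟨hu₀u, hu⟩
      rcases le_or_gt u (l ^ (n + 1) * u₀) with hle | hgt
      · exact ih u ⟨hu₀u, hle⟩
      have hlu : l * u₀ < u := lt_of_le_of_lt
        (mul_le_mul_of_nonneg_right (le_self_pow₀ hl.le (by omega)) hu₀.le) hgt
      refine hstep u hlu (ih _ ⟨?_, ?_⟩)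
      · rw [le_div_iff₀ hl₀]; linarith
      · rw [div_le_iff₀ hl₀]
        calc u ≤ _ := hu
          _ = _ := by ring
  intro u hu
  obtain ⟨n, hn⟩ := pow_unbounded_of_one_lt (u / u₀) hl
  rw [div_lt_iff₀ hu₀] at hn
  exact hscale n u ⟨hu, by nlinarith [le_self_pow₀ hl.le (n := 1) one_ne_zero, pow_succ l n]⟩

lemma le_exp_neg_of_recursion_step {G : ℝ → ℝ} {c γ d₀ α b l u : ℝ}
    (hrec : ∀ u v, d₀ ≤ u - v → G u ≤ 2 * exp (-c * (u - v) ^ γ) + G v ^ 2)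
    (hG₀ : ∀ u, 0 ≤ G u) (hl : 0 < l) (hl₂ : l ^ α * l ^ α = 2) (hu : 0 < u)
    (hd₀ : d₀ ≤ u - u / l) (hA : b * u ^ α + log 4 ≤ c * (u - u / l) ^ γ)
    (hB : log 2 ≤ (l ^ α - 1) * (b * u ^ α))
    (hv : G (u / l) ≤ exp (-b * (u / l) ^ α)) : G u ≤ exp (-b * u ^ α) := by
  set B := b * u ^ α
  have hfirst : 4 * exp (-c * (u - u / l) ^ γ) ≤ exp (-B) := by
    rw [neg_mul]; exact mul_exp_neg_le_exp_neg (by norm_num) (by linarith)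
  have hsq : G (u / l) ^ 2 ≤ exp (-(l ^ α * B)) := by
    calc G (u / l) ^ 2 ≤ exp (-b * (u / l) ^ α) ^ 2 := pow_le_pow_left₀ (hG₀ _) hv 2
      _ = exp (-(l ^ α * B)) := by
        have hlα : 0 < l ^ α := rpow_pos_of_pos hl α
        rw [← exp_nat_mul, div_rpow hu.le hl.le]
        congr 1
        field_simp
        linear_combination b * u ^ α * hl₂
  have hsecond : 2 * exp (-(l ^ α * B)) ≤ exp (-B) :=
    mul_exp_neg_le_exp_neg two_pos (by linarith)
  calc G u ≤ 2 * exp (-c * (u - u / l) ^ γ) + G (u / l) ^ 2 := hrec u (u / l) hd₀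
    _ ≤ exp (-B) := by linarith
    _ = exp (-b * u ^ α) := by rw [neg_mul]

theorem exists_forall_ge_le_exp_neg_mul_rpow {G : ℝ → ℝ} {c γ d₀ α : ℝ} (hc : 0 < c)
    (hG₀ : ∀ u, 0 ≤ G u) (hG : Antitone G) (hGlim : Tendsto G atTop (𝓝 0))
    (hrec : ∀ u v, d₀ ≤ u - v → G u ≤ 2 * exp (-c * (u - v) ^ γ) + G v ^ 2)
    (hα : 0 < α) (hαγ : α < γ) :
    ∃ b, 0 < b ∧ ∃ u₀, ∀ u, u₀ ≤ u → G u ≤ exp (-b * u ^ α) := by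
  set l := √2 ^ α⁻¹
  have hl : 1 < l := one_lt_rpow one_lt_sqrt_two (inv_pos.2 hα)
  have hl₀ : 0 < l := by linarith
  have hlα : l ^ α = √2 := rpow_inv_rpow (by positivity) hα.ne'
  have hsqrt : 1 < √2 := one_lt_sqrt_two
  set κ := 1 - l⁻¹
  have hκ : 0 < κ := sub_pos.2 (inv_lt_one_of_one_lt₀ hl)
  have hκu : ∀ u, u - u / l = κ * u := fun u => by ring
  -- `β = b u₀ ^ α`, the least value making `(√2 - 1) b u ^ α ≥ log 2` on `[u₀, ∞)`
  set β := log 2 / (√2 - 1)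
  have hβ : 0 < β := div_pos (log_pos one_lt_two) (by linarith)
  obtain ⟨u₀, hu₀, hGu₀, hβu₀, hlarge⟩ : ∃ u₀, 0 < u₀ ∧ G u₀ ≤ exp (-(√2 * β)) ∧
      β ≤ u₀ ^ α ∧ ∀ u, u₀ ≤ u → d₀ ≤ κ * u ∧ u ^ α + log 4 ≤ c * κ ^ γ * u ^ γ := by
    have hlin := (tendsto_id.const_mul_atTop hκ).eventually_ge_atTop d₀
    have hpow := eventually_rpow_add_le_mul_rpow hα hαγ (by positivity : 0 < c * κ ^ γ) (log 4)
    exact ((eventually_gt_atTop 0).and <| (hGlim.eventually_le_const (exp_pos _)).and <|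
      ((tendsto_rpow_atTop hα).eventually_ge_atTop β).and <|
      eventually_forall_ge_atTop.2 (hlin.and hpow)).exists
  have hu₀α : 0 < u₀ ^ α := rpow_pos_of_pos hu₀ α
  set b := β / u₀ ^ α
  have hb : 0 < b := div_pos hβ hu₀α
  have hb₁ : b ≤ 1 := (div_le_one hu₀α).2 hβu₀
  have hbu₀ : b * u₀ ^ α = β := div_mul_cancel₀ β hu₀α.ne'
  refine ⟨b, hb, u₀, forall_ge_of_Icc_of_div hl hu₀ ?_ ?_⟩
  · rintro u ⟨hu₀u, hul⟩
    refine (hG hu₀u).trans (hGu₀.trans (exp_le_exp.2 ?_))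
    have : u ^ α ≤ (l * u₀) ^ α := rpow_le_rpow (by linarith) hul hα.le
    rw [mul_rpow hl₀.le hu₀.le, hlα] at this
    nlinarith
  · intro u hlu hv
    have hu₀u : u₀ ≤ u := by nlinarith
    have hu : 0 < u := by linarith
    obtain ⟨hd₀, hbig⟩ := hlarge u hu₀u
    have hmono : u₀ ^ α ≤ u ^ α := rpow_le_rpow hu₀.le hu₀u hα.le
    refine le_exp_neg_of_recursion_step hrec hG₀ hl₀ (by rw [hlα, mul_self_sqrt zero_le_two])
      hu (by rw [hκu]; exact hd₀) ?_ ?_ hv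
    · rw [hκu, mul_rpow hκ.le hu.le]
      nlinarith
    · have hβu : β ≤ b * u ^ α := hbu₀ ▸ mul_le_mul_of_nonneg_left hmono hb.le
      calc log 2 = (√2 - 1) * β := (mul_div_cancel₀ _ (by linarith)).symm
        _ ≤ (l ^ α - 1) * (b * u ^ α) := by rw [hlα]; gcongr

lemma exp_neg_mul_smoothing_le {t x w₀ w₁ y₀ y₁ : ℝ} (ht : 0 ≤ t) (hw₀ : 0 ≤ w₀) (hw₁ : 0 ≤ w₁)
    (hy₀ : 0 ≤ y₀) (hy₁ : 0 ≤ y₁) :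
    exp (-t * (w₀ * y₀ + w₁ * y₁)) ≤
      (Iic x).indicator 1 w₀ + (Iic x).indicator 1 w₁ + exp (-(t * x) * (y₀ + y₁)) := by
  have hle_one : exp (-t * (w₀ * y₀ + w₁ * y₁)) ≤ 1 := exp_le_one_iff.2 (by
    have : 0 ≤ w₀ * y₀ + w₁ * y₁ := by positivity
    nlinarith)
  have hind : ∀ w, 0 ≤ (Iic x).indicator (1 : ℝ → ℝ) w := indicator_nonneg (fun _ _ => zero_le_one)
  have hexp := exp_pos (-(t * x) * (y₀ + y₁))
  by_cases h₀ : w₀ ≤ x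
  · rw [indicator_of_mem (mem_Iic.2 h₀), Pi.one_apply]; linarith [hind w₁]
  by_cases h₁ : w₁ ≤ x
  · rw [indicator_of_mem (mem_Iic.2 h₁), Pi.one_apply]; linarith [hind w₀]
  rw [not_le] at h₀ h₁
  have : exp (-t * (w₀ * y₀ + w₁ * y₁)) ≤ exp (-(t * x) * (y₀ + y₁)) := exp_le_exp.2 (by
    have := mul_le_mul_of_nonneg_right h₀.le hy₀
    have := mul_le_mul_of_nonneg_right h₁.le hy₁
    nlinarith)
  linarith [hind w₀, hind w₁]

section Laplace

variable {Ω : Type*} [MeasurableSpace Ω] {μ : Measure Ω} {X Y : Ω → ℝ}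

lemma integrable_exp_neg_mul [IsFiniteMeasure μ] (hX : AEMeasurable X μ) (hX₀ : 0 ≤ᵐ[μ] X)
    {t : ℝ} (ht : 0 ≤ t) : Integrable (fun ω => exp (-t * X ω)) μ := by
  simpa [mul_neg] using integrable_exp_mul_of_le t 0 ht hX.neg
    (by filter_upwards [hX₀] with ω h using by simpa using h)

lemma mgf_neg_le_mgf_neg_of_le [IsFiniteMeasure μ] (hX : AEMeasurable X μ) (hX₀ : 0 ≤ᵐ[μ] X)
    {s t : ℝ} (hs : 0 ≤ s) (hst : s ≤ t) : mgf X μ (-t) ≤ mgf X μ (-s) := by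
  refine integral_mono_ae (integrable_exp_neg_mul hX hX₀ (hs.trans hst))
    (integrable_exp_neg_mul hX hX₀ hs) ?_
  filter_upwards [hX₀] with ω (h : 0 ≤ X ω)
  exact exp_le_exp.2 (by nlinarith)

lemma tendsto_mgf_neg_atTop [IsFiniteMeasure μ] (hX : AEMeasurable X μ)
    (hX₀ : ∀ᵐ ω ∂μ, 0 < X ω) : Tendsto (fun t => mgf X μ (-t)) atTop (𝓝 0) := by
  have hlim : Tendsto (fun t => ∫ ω, exp (-t * X ω) ∂μ) atTop (𝓝 (∫ _, (0 : ℝ) ∂μ)) :=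
    tendsto_integral_filter_of_dominated_convergence (fun _ => 1)
      (Eventually.of_forall fun t => aemeasurable_exp_mul _ hX) ?_ (integrable_const 1) ?_
  · rwa [integral_zero] at hlim
  · filter_upwards [eventually_ge_atTop 0] with t ht
    filter_upwards [hX₀] with ω h
    rw [norm_of_nonneg (exp_pos _).le, exp_le_one_iff]
    nlinarith
  · filter_upwards [hX₀] with ω h
    exact tendsto_exp_atBot.comp ((tendsto_neg_atTop_atBot.atBot_mul_const h))

theorem mgf_neg_le_of_measure_le [IsProbabilityMeasure μ] (hX : AEMeasurable X μ)
    (hY : AEMeasurable Y μ) (hY₀ : 0 ≤ᵐ[μ] Y)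
    (hdom : ∀ x, μ {ω | x ≤ Y ω} ≤ μ {ω | x ≤ X ω}) {t : ℝ} (ht : 0 < t) :
    mgf X μ (-t) ≤ mgf Y μ (-t) := by
  have hexp : ∀ Z : Ω → ℝ, AEMeasurable Z μ → AEMeasurable (fun ω => exp (-t * Z ω)) μ :=
    fun Z hZ => measurable_exp.comp_aemeasurable (hZ.const_mul _)
  have hnn : ∀ Z : Ω → ℝ, 0 ≤ᵐ[μ] fun ω => exp (-t * Z ω) :=
    fun Z => ae_of_all _ fun ω => (exp_pos _).le
  have hlevel : ∀ (Z : Ω → ℝ) (s : ℝ), 0 < s →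
      {ω | s < exp (-t * Z ω)} = {ω | -log s / t ≤ Z ω}ᶜ := by
    intro Z s hs
    ext ω
    change s < exp (-t * Z ω) ↔ ¬(-log s / t ≤ Z ω)
    rw [not_le, lt_div_iff₀ ht, ← log_lt_iff_lt_exp hs]
    constructor <;> intro h <;> linarith
  have hlint : ∫⁻ ω, ENNReal.ofReal (exp (-t * X ω)) ∂μ ≤
      ∫⁻ ω, ENNReal.ofReal (exp (-t * Y ω)) ∂μ := by
    rw [lintegral_eq_lintegral_meas_lt μ (hnn X) (hexp X hX),
      lintegral_eq_lintegral_meas_lt μ (hnn Y) (hexp Y hY)]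
    refine setLIntegral_mono' measurableSet_Ioi fun s hs => ?_
    rw [hlevel X s hs, hlevel Y s hs,
      prob_compl_eq_one_sub₀ (nullMeasurableSet_le aemeasurable_const hX),
      prob_compl_eq_one_sub₀ (nullMeasurableSet_le aemeasurable_const hY)]
    exact tsub_le_tsub_left (hdom _) 1
  rw [mgf, mgf, integral_eq_lintegral_of_nonneg_ae (hnn X) (hexp X hX).aestronglyMeasurable,
    integral_eq_lintegral_of_nonneg_ae (hnn Y) (hexp Y hY).aestronglyMeasurable]
  exact ENNReal.toReal_mono (integrable_exp_neg_mul hY hY₀ ht.le).lintegral_lt_top.ne hlint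

end Laplace

theorem mgf_neg_le_of_smoothing {Ω : Type*} [MeasurableSpace Ω] {μ : Measure Ω}
    [IsProbabilityMeasure μ] {W Y W₀ W₁ Y₀ Y₁ : Ω → ℝ}
    (hW₀m : Measurable W₀) (hW₁m : Measurable W₁) (hY₀m : Measurable Y₀) (hY₁m : Measurable Y₁)
    (hW₀ : IdentDistrib W₀ W μ μ) (hW₁ : IdentDistrib W₁ W μ μ)
    (hY₀ : IdentDistrib Y₀ Y μ μ) (hY₁ : IdentDistrib Y₁ Y μ μ) (hYind : IndepFun Y₀ Y₁ μ)
    (hW : 0 ≤ᵐ[μ] W) (hY : 0 ≤ᵐ[μ] Y)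
    (hdom : ∀ x, μ {ω | x ≤ W₀ ω * Y₀ ω + W₁ ω * Y₁ ω} ≤ μ {ω | x ≤ Y ω})
    {t x : ℝ} (ht : 0 < t) (hx : 0 ≤ x) :
    mgf Y μ (-t) ≤ 2 * μ.real {ω | W ω ≤ x} + mgf Y μ (-(t * x)) ^ 2 := by
  have hnonneg : MeasurableSet {w : ℝ | 0 ≤ w} := measurableSet_Ici
  have hW₀' : 0 ≤ᵐ[μ] W₀ := hW₀.symm.ae_snd hnonneg hW
  have hW₁' : 0 ≤ᵐ[μ] W₁ := hW₁.symm.ae_snd hnonneg hW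
  have hY₀' : 0 ≤ᵐ[μ] Y₀ := hY₀.symm.ae_snd hnonneg hY
  have hY₁' : 0 ≤ᵐ[μ] Y₁ := hY₁.symm.ae_snd hnonneg hY
  have hS : 0 ≤ᵐ[μ] fun ω => W₀ ω * Y₀ ω + W₁ ω * Y₁ ω := by
    filter_upwards [hW₀', hW₁', hY₀', hY₁'] with ω (h₀ : 0 ≤ W₀ ω) (h₁ : 0 ≤ W₁ ω)
      (h₂ : 0 ≤ Y₀ ω) (h₃ : 0 ≤ Y₁ ω)
    positivity
  have hind : ∀ {V : Ω → ℝ}, Measurable V → IdentDistrib V W μ μ →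
      Integrable (fun ω => (Iic x).indicator (1 : ℝ → ℝ) (V ω)) μ ∧
      ∫ ω, (Iic x).indicator (1 : ℝ → ℝ) (V ω) ∂μ = μ.real {ω | W ω ≤ x} := by
    intro V hVm hV
    have hcomp : (fun ω => (Iic x).indicator (1 : ℝ → ℝ) (V ω)) = (V ⁻¹' Iic x).indicator 1 :=
      funext fun ω => (indicator_comp_right V (s := Iic x) (g := 1)).symm
    rw [hcomp]
    refine ⟨(integrable_const 1).indicator (hVm measurableSet_Iic), ?_⟩
    rw [integral_indicator_one (hVm measurableSet_Iic), measureReal_def, measureReal_def,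
      hV.measure_mem_eq measurableSet_Iic]
    rfl
  obtain ⟨hint₀, hmean₀⟩ := hind hW₀m hW₀
  obtain ⟨hint₁, hmean₁⟩ := hind hW₁m hW₁
  have hSm : AEMeasurable (fun ω => W₀ ω * Y₀ ω + W₁ ω * Y₁ ω) μ :=
    ((hW₀m.mul hY₀m).add (hW₁m.mul hY₁m)).aemeasurable
  have hindsum : Integrable
      (fun ω => (Iic x).indicator (1 : ℝ → ℝ) (W₀ ω) + (Iic x).indicator 1 (W₁ ω)) μ :=
    hint₀.add hint₁
  have hexp : Integrable (fun ω => exp (-(t * x) * (Y₀ + Y₁) ω)) μ :=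
    integrable_exp_neg_mul (hY₀m.add hY₁m).aemeasurable
      (hY₀'.and hY₁' |>.mono fun _ h => add_nonneg h.1 h.2) (by positivity)
  calc mgf Y μ (-t) ≤ mgf (fun ω => W₀ ω * Y₀ ω + W₁ ω * Y₁ ω) μ (-t) :=
        mgf_neg_le_of_measure_le hY₀.aemeasurable_snd hSm hS hdom ht
    _ ≤ ∫ ω, ((Iic x).indicator (1 : ℝ → ℝ) (W₀ ω) + (Iic x).indicator 1 (W₁ ω) +
          exp (-(t * x) * (Y₀ + Y₁) ω)) ∂μ := by
        refine integral_mono_ae (integrable_exp_neg_mul hSm hS ht.le) (hindsum.add hexp) ?_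
        filter_upwards [hW₀', hW₁', hY₀', hY₁'] with ω h₀ h₁ h₂ h₃
        exact exp_neg_mul_smoothing_le ht.le h₀ h₁ h₂ h₃
    _ = 2 * μ.real {ω | W ω ≤ x} + mgf (Y₀ + Y₁) μ (-(t * x)) := by
        rw [integral_add hindsum hexp, integral_add hint₀ hint₁, hmean₀, hmean₁, mgf]
        ring
    _ = 2 * μ.real {ω | W ω ≤ x} + mgf Y μ (-(t * x)) ^ 2 := by
        rw [hYind.mgf_add' hY₀m.aestronglyMeasurable hY₁m.aestronglyMeasurable,
          mgf_congr_identDistrib hY₀, mgf_congr_identDistrib hY₁, sq]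

theorem nikula_laplace_bound_general {Ω : Type*} [MeasurableSpace Ω]
    (μ : Measure Ω) [IsProbabilityMeasure μ]
    (W Y W₀ W₁ Y₀ Y₁ : Ω → ℝ)
    (hWm : Measurable W) (hYm : Measurable Y)
    (hW₀m : Measurable W₀) (hW₁m : Measurable W₁)
    (hY₀m : Measurable Y₀) (hY₁m : Measurable Y₁)
    (hYpos : ∀ᵐ ω ∂μ, 0 < Y ω) (hWpos : ∀ᵐ ω ∂μ, 0 < W ω)
    (hY₀d : Measure.map Y₀ μ = Measure.map Y μ)
    (hY₁d : Measure.map Y₁ μ = Measure.map Y μ)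
    (hW₀d : Measure.map W₀ μ = Measure.map W μ)
    (hW₁d : Measure.map W₁ μ = Measure.map W μ)
    (hYind : IndepFun Y₀ Y₁ μ)
    (hdom : ∀ x : ℝ, μ {ω | x ≤ W₀ ω * Y₀ ω + W₁ ω * Y₁ ω} ≤ μ {ω | x ≤ Y ω})
    (γ c x' : ℝ) (hc : 0 < c) (hx'0 : 0 < x')
    (htail : ∀ x : ℝ, 0 < x → x ≤ x' →
      μ {ω | W ω ≤ x} ≤ ENNReal.ofReal (Real.exp (-c * (-Real.log x) ^ γ))) :
    ∀ α : ℝ, 1 ≤ α → α < γ →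
      ∃ cα : ℝ, 0 < cα ∧ ∃ tα : ℝ, 0 < tα ∧ ∀ t : ℝ, tα ≤ t →
        ∫ ω, Real.exp (-t * Y ω) ∂μ ≤ Real.exp (-cα * (Real.log t) ^ α) := by
  intro α hα hαγ
  have hY₀ : IdentDistrib Y₀ Y μ μ := ⟨hY₀m.aemeasurable, hYm.aemeasurable, hY₀d⟩
  have hY₁ : IdentDistrib Y₁ Y μ μ := ⟨hY₁m.aemeasurable, hYm.aemeasurable, hY₁d⟩
  have hW₀ : IdentDistrib W₀ W μ μ := ⟨hW₀m.aemeasurable, hWm.aemeasurable, hW₀d⟩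
  have hW₁ : IdentDistrib W₁ W μ μ := ⟨hW₁m.aemeasurable, hWm.aemeasurable, hW₁d⟩
  have hY : 0 ≤ᵐ[μ] Y := hYpos.mono fun _ h => h.le
  have hrec : ∀ u v, -log x' ≤ u - v → mgf Y μ (-exp u) ≤
      2 * exp (-c * (u - v) ^ γ) + mgf Y μ (-exp v) ^ 2 := by
    intro u v huv
    have hx : exp (v - u) ≤ x' := by rw [← exp_log hx'0]; exact exp_le_exp.2 (by linarith)
    have htail' := htail _ (exp_pos _) hx
    rw [log_exp, neg_sub] at htail'
    have hsmooth := mgf_neg_le_of_smoothing hW₀m hW₁m hY₀m hY₁m hW₀ hW₁ hY₀ hY₁ hYind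
      (hWpos.mono fun _ h => h.le) hY hdom (exp_pos u) (exp_pos (v - u)).le
    rw [← exp_add, add_sub_cancel] at hsmooth
    have hsmall : μ.real {ω | W ω ≤ exp (v - u)} ≤ exp (-c * (u - v) ^ γ) :=
      ENNReal.toReal_le_of_le_ofReal (exp_pos _).le htail'
    linarith
  obtain ⟨b, hb, u₀, hbound⟩ := exists_forall_ge_le_exp_neg_mul_rpow hc (fun _ => mgf_nonneg)
    (fun u v huv => mgf_neg_le_mgf_neg_of_le hYm.aemeasurable hY (exp_pos u).le
      (exp_le_exp.2 huv))
    ((tendsto_mgf_neg_atTop hYm.aemeasurable hYpos).comp tendsto_exp_atTop) hrec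
    (by linarith) hαγ
  refine ⟨b, hb, exp u₀, exp_pos u₀, fun t ht => ?_⟩
  have ht₀ : 0 < t := (exp_pos u₀).trans_le ht
  have hlog := hbound (log t) ((le_log_iff_exp_le ht₀).2 ht)
  rwa [exp_log ht₀] at hlog

/-- Nikula's small-ball theorem: if `Y ⪰ W₀Y₀ + W₁Y₁` (smoothing inequality) with
`(Y₀,Y₁)` an independent pair of copies of `Y` independent of `(W₀,W₁)`, copies of `W`,
and `W` has the small-tail bound `P(W ≤ x) ≤ exp(-c(-log x)^γ)`, then for every
`α ∈ [1, γ)` the Laplace transform satisfies `E[e^{-tY}] ≤ exp(-c_α (log t)^α)`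
for all large `t`. -/
theorem nikula_laplace_bound {Ω : Type*} [MeasurableSpace Ω]
    (μ : Measure Ω) [IsProbabilityMeasure μ]
    (W Y W₀ W₁ Y₀ Y₁ : Ω → ℝ)
    (hWm : Measurable W) (hYm : Measurable Y)
    (hW₀m : Measurable W₀) (hW₁m : Measurable W₁)
    (hY₀m : Measurable Y₀) (hY₁m : Measurable Y₁)
    (hYpos : ∀ᵐ ω ∂μ, 0 < Y ω) (hWpos : ∀ᵐ ω ∂μ, 0 < W ω)
    (hY₀d : Measure.map Y₀ μ = Measure.map Y μ)
    (hY₁d : Measure.map Y₁ μ = Measure.map Y μ)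
    (hW₀d : Measure.map W₀ μ = Measure.map W μ)
    (hW₁d : Measure.map W₁ μ = Measure.map W μ)
    (hYind : IndepFun Y₀ Y₁ μ)
    (hYWind : IndepFun (fun ω => (Y₀ ω, Y₁ ω)) (fun ω => (W₀ ω, W₁ ω)) μ)
    (hdom : ∀ x : ℝ, μ {ω | x ≤ W₀ ω * Y₀ ω + W₁ ω * Y₁ ω} ≤ μ {ω | x ≤ Y ω})
    (γ c x' : ℝ) (hγ : 1 < γ) (hc : 0 < c) (hx'0 : 0 < x') (hx'1 : x' < 1)
    (htail : ∀ x : ℝ, 0 < x → x ≤ x' →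
      μ {ω | W ω ≤ x} ≤ ENNReal.ofReal (Real.exp (-c * (-Real.log x) ^ γ))) :
    ∀ α : ℝ, 1 ≤ α → α < γ →
      ∃ cα : ℝ, 0 < cα ∧ ∃ tα : ℝ, 0 < tα ∧ ∀ t : ℝ, tα ≤ t →
        ∫ ω, Real.exp (-t * Y ω) ∂μ ≤ Real.exp (-cα * (Real.log t) ^ α) :=
  nikula_laplace_bound_general μ W Y W₀ W₁ Y₀ Y₁ hWm hYm hW₀m hW₁m hY₀m hY₁m hYpos hWpos hY₀d hY₁d
    hW₀d hW₁d hYind hdom γ c x' hc hx'0 htail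
end
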